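/- arXiv:1410.5995 — 2 statements merged into one kernel-verified Lean document; each statement's English description precedes it below -/
import Mathlib

section
/- Let G be a finite connected coherently signed graph. Then the set of negatively signed edges is a cut-set: there exists a subset S ⊆ V such that ∂S is exactly the set of edges e with sgn e = −1. -/
open scoped Classical
open Matrix

noncomputable section

namespace SignedPaper

variable {V : Type*}

/-- The twisted Laplacian `Δ^τ` of a signed graph: `(Δ^τ f)(x) = d(x) f(x) - ∑_{y ∈ N(x)} sgn(x,y) f(y)`. -/
def twistedLaplacian [Fintype V] [DecidableEq V] (G : SimpleGraph V) [DecidableRel G.Adj]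
    (sgn : Sym2 V → ℝ) : Matrix V V ℝ :=
  Matrix.of fun x y =>
    if x = y then (G.degree x : ℝ) else if G.Adj x y then - sgn s(x, y) else 0

/-- The sign function takes values ±1 on every edge. -/
def IsSigning (G : SimpleGraph V) (sgn : Sym2 V → ℝ) : Prop :=
  ∀ e ∈ G.edgeSet, sgn e = 1 ∨ sgn e = -1

/-- A signed graph is coherently signed if every cycle has sign +1. -/
def IsCoherent (G : SimpleGraph V) (sgn : Sym2 V → ℝ) : Prop :=
  ∀ (v : V) (c : G.Walk v v), c.IsCycle → (c.edges.map sgn).prod = 1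

/-- The subgraph induced on a vertex subset `S`, viewed as a graph on `V`. -/
def inducedOn (G : SimpleGraph V) (S : Set V) : SimpleGraph V where
  Adj x y := G.Adj x y ∧ x ∈ S ∧ y ∈ S
  symm := ⟨fun x y h => ⟨h.1.symm, h.2.2, h.2.1⟩⟩
  loopless := ⟨fun x h => G.irrefl h.1⟩

/-- `e_mc(S)`: the minimal number of edges to delete from the induced subgraph on `S`
so that the result is coherently signed. -/
def emc (G : SimpleGraph V) (sgn : Sym2 V → ℝ) (S : Set V) : ℕ :=
  sInf {n : ℕ | ∃ F : Finset (Sym2 V), F.card = n ∧ ↑F ⊆ (inducedOn G S).edgeSet ∧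
    IsCoherent ((inducedOn G S).deleteEdges ↑F) sgn}

/-- `∂S`: the set of edges with exactly one endpoint in `S`. -/
def edgeBoundary [Fintype V] [DecidableEq V] (G : SimpleGraph V) (S : Set V) :
    Finset (Sym2 V) :=
  Finset.univ.filter fun e : Sym2 V => e ∈ G.edgeSet ∧ ∃ x y, e = s(x, y) ∧ x ∈ S ∧ y ∉ S

/-- `ψ(S) = (|∂S| + 2 e_mc(S)) / |S|`. -/
def psiSet [Fintype V] [DecidableEq V] (G : SimpleGraph V) (sgn : Sym2 V → ℝ)
    (S : Finset V) : ℝ :=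
  ((edgeBoundary G ↑S).card + 2 * emc G sgn ↑S) / S.card

/-- `ψ(G) = min_{∅ ≠ S ⊆ V} ψ(S)`. -/
def psi [Fintype V] [DecidableEq V] (G : SimpleGraph V) (sgn : Sym2 V → ℝ) : ℝ :=
  sInf {x : ℝ | ∃ S : Finset V, S.Nonempty ∧ x = psiSet G sgn S}

/-- `ψ̃(G) = min_{∅ ≠ S ⊆ V} (|∂S| + 4 e_mc(S)) / |S|`. -/
def psiTilde [Fintype V] [DecidableEq V] (G : SimpleGraph V) (sgn : Sym2 V → ℝ) : ℝ :=
  sInf {x : ℝ | ∃ S : Finset V, S.Nonempty ∧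
    x = ((edgeBoundary G ↑S).card + 4 * emc G sgn ↑S) / S.card}

/-- `h(S) = min_{∅ ≠ T ⊆ S} |∂T| / |T|`. -/
def hConst [Fintype V] [DecidableEq V] (G : SimpleGraph V) (S : Finset V) : ℝ :=
  sInf {x : ℝ | ∃ T : Finset V, T ⊆ S ∧ T.Nonempty ∧ x = (edgeBoundary G ↑T).card / T.card}

/-- The signed adjacency matrix `A^τ`. -/
def signedAdjMatrix [Fintype V] (G : SimpleGraph V) [DecidableRel G.Adj]
    (sgn : Sym2 V → ℝ) : Matrix V V ℝ :=
  Matrix.of fun x y => if G.Adj x y then sgn s(x, y) else 0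

/-! Shortcutting a walk with `Walk.bypass` deletes closed subwalks, each a path closed up by one
edge: a cycle, or an edge traversed back and forth. Neither changes the sign, so every closed walk
has sign `1`. Hence for a root `v₀` the sign `f v` of a walk from `v₀` to `v` is well defined, every
edge `xy` has sign `f x * f y`, and the negative edges are exactly `∂{v | f v = 1}`. -/

open SimpleGraph

variable {G : SimpleGraph V} {sgn : Sym2 V → ℝ}

def walkSign (sgn : Sym2 V → ℝ) {u v : V} (p : G.Walk u v) : ℝ :=
  (p.edges.map sgn).prod

@[simp]
lemma walkSign_nil {u : V} : walkSign sgn (Walk.nil : G.Walk u u) = 1 := rfl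

@[simp]
lemma walkSign_cons {u v w : V} (h : G.Adj u v) (p : G.Walk v w) :
    walkSign sgn (Walk.cons h p) = sgn s(u, v) * walkSign sgn p := by
  simp [walkSign]

@[simp]
lemma walkSign_append {u v w : V} (p : G.Walk u v) (q : G.Walk v w) :
    walkSign sgn (p.append q) = walkSign sgn p * walkSign sgn q := by
  simp [walkSign]

@[simp]
lemma walkSign_reverse {u v : V} (p : G.Walk u v) :
    walkSign sgn p.reverse = walkSign sgn p := by
  simp [walkSign, List.prod_reverse]

lemma sgn_mul_self (hsgn : IsSigning G sgn) {x y : V} (h : G.Adj x y) :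
    sgn s(x, y) * sgn s(x, y) = 1 := by
  rcases hsgn s(x, y) h with hs | hs <;> simp [hs]

lemma walkSign_mul_self (hsgn : IsSigning G sgn) {u v : V} (p : G.Walk u v) :
    walkSign sgn p * walkSign sgn p = 1 := by
  induction p with
  | nil => simp
  | cons h p ih =>
    rw [walkSign_cons]
    linear_combination (walkSign sgn p) ^ 2 * sgn_mul_self hsgn h + ih

lemma walkSign_eq_one_or_neg_one (hsgn : IsSigning G sgn) {u v : V} (p : G.Walk u v) :
    walkSign sgn p = 1 ∨ walkSign sgn p = -1 :=
  mul_self_eq_one_iff.mp (walkSign_mul_self hsgn p)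

namespace IsCoherent

variable (hsgn : IsSigning G sgn) (hcoh : IsCoherent G sgn)
include hsgn hcoh

lemma walkSign_cons_eq_one_of_isPath {u v : V} (h : G.Adj u v) {q : G.Walk v u} (hq : q.IsPath) :
    walkSign sgn (Walk.cons h q) = 1 := by
  by_cases he : s(u, v) ∈ q.edges
  · rw [Sym2.eq_swap] at he
    rw [hq.eq_adj_toWalk_of_mem_edges he]
    simp [Sym2.eq_swap (a := v), sgn_mul_self hsgn h]
  · exact hcoh u _ ((Walk.cons_isCycle_iff q h).mpr ⟨hq, he⟩)

lemma walkSign_bypass [DecidableEq V] {u v : V} (p : G.Walk u v) :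
    walkSign sgn p.bypass = walkSign sgn p := by
  induction p with
  | nil => rfl
  | @cons u v w h p ih =>
    rw [Walk.bypass, walkSign_cons, ← ih]
    split_ifs with hu
    · have hsplit := congr_arg (walkSign sgn) (p.bypass.take_spec hu)
      have hloop := walkSign_cons_eq_one_of_isPath hsgn hcoh h (p.bypass_isPath.takeUntil hu)
      rw [walkSign_append] at hsplit
      rw [walkSign_cons] at hloop
      rw [← hsplit, ← mul_assoc, hloop, one_mul]
    · rfl

lemma walkSign_closed_eq_one {u : V} (c : G.Walk u u) : walkSign sgn c = 1 := by
  classical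
  rw [← walkSign_bypass hsgn hcoh, (Walk.isPath_iff_nil.mp c.bypass_isPath).eq_nil, walkSign_nil]

lemma exists_switching (hG : G.Connected) :
    ∃ f : V → ℝ, (∀ v, f v = 1 ∨ f v = -1) ∧ ∀ x y, G.Adj x y → sgn s(x, y) = f x * f y := by
  obtain ⟨v₀⟩ := hG.nonempty
  let path (v : V) : G.Walk v₀ v := (hG.preconnected v₀ v).some
  refine ⟨fun v => walkSign sgn (path v), fun v => walkSign_eq_one_or_neg_one hsgn _, ?_⟩
  intro x y hxy
  have hloop := walkSign_closed_eq_one hsgn hcoh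
    (((path x).append (Walk.cons hxy Walk.nil)).append (path y).reverse)
  simp only [walkSign_append, walkSign_cons, walkSign_nil, walkSign_reverse, mul_one] at hloop
  linear_combination walkSign sgn (path x) * walkSign sgn (path y) * hloop
    - sgn s(x, y) * walkSign sgn (path y) ^ 2 * walkSign_mul_self hsgn (path x)
    - sgn s(x, y) * walkSign_mul_self hsgn (path y)

end IsCoherent

lemma mk_mem_edgeBoundary_iff [Fintype V] [DecidableEq V] {S : Set V} {x y : V} :
    s(x, y) ∈ edgeBoundary G S ↔ G.Adj x y ∧ Xor (x ∈ S) (y ∈ S) := by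
  simp only [edgeBoundary, Finset.mem_filter, Finset.mem_univ, true_and, mem_edgeSet,
    Sym2.eq_iff, Xor]
  constructor
  · rintro ⟨hxy, a, b, (⟨rfl, rfl⟩ | ⟨rfl, rfl⟩), ha, hb⟩ <;> tauto
  · rintro ⟨hxy, ⟨hx, hy⟩ | ⟨hy, hx⟩⟩
    · exact ⟨hxy, x, y, Or.inl ⟨rfl, rfl⟩, hx, hy⟩
    · exact ⟨hxy, y, x, Or.inr ⟨rfl, rfl⟩, hy, hx⟩

lemma coe_edgeBoundary_eq_of_switching [Fintype V] [DecidableEq V] {f : V → ℝ}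
    (hf : ∀ v, f v = 1 ∨ f v = -1) (hsw : ∀ x y, G.Adj x y → sgn s(x, y) = f x * f y) :
    (edgeBoundary G {v | f v = 1} : Set (Sym2 V)) = {e | e ∈ G.edgeSet ∧ sgn e = -1} := by
  ext e
  induction e using Sym2.ind with
  | _ x y =>
    simp only [Finset.mem_coe, mk_mem_edgeBoundary_iff, Set.mem_ofPred_eq, mem_edgeSet]
    refine and_congr_right fun hxy => ?_
    rw [hsw x y hxy]
    rcases hf x with hx | hx <;> rcases hf y with hy | hy <;> norm_num [Xor, hx, hy]

/-- In a finite connected coherently signed graph, the set of negatively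
signed edges is a cut-set: it equals `∂S` for some `S ⊆ V`. -/
theorem isCoherent_negEdges_cutSet [Fintype V] [DecidableEq V] (G : SimpleGraph V)
    (hG : G.Connected) (sgn : Sym2 V → ℝ) (hsgn : IsSigning G sgn)
    (hcoh : IsCoherent G sgn) :
    ∃ S : Finset V, (edgeBoundary G ↑S : Set (Sym2 V)) = {e | e ∈ G.edgeSet ∧ sgn e = -1} := by
  obtain ⟨f, hf, hsw⟩ := hcoh.exists_switching hsgn hG
  refine ⟨{v | f v = 1}.toFinset, ?_⟩
  rw [Set.coe_toFinset]
  exact coe_edgeBoundary_eq_of_switching hf hsw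

end SignedPaper
end
end

section
/- Let G = (V, E) be a finite simple (unsigned) graph with |V| ≥ 4 and maximal degree d_max. Let S ⊊ V with |S| ≤ |V|/2 and let f : V → ℝ satisfy f(x) > 0 for all x ∈ S and f(x) = 0 for all x ∉ S. Then Σ_{{x,y} ∈ E} (f(y) − f(x))² ≥ ( d_max − √(d_max² − h(S)²) ) · Σ_{x ∈ V} f(x)², where h(S) = min over nonempty T ⊆ S of |∂T|/|T|. -/
/-!
Discrete co-area: let `g ≥ 0` vanish off `S` and let `m` be its least value on its support `T`.
Then `∑_{edges} |g(y) - g(x)|` is the same sum for `(g - m)⁺` plus `m |∂T|`, and `∑ g` is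
`∑ (g - m)⁺` plus `m |T|`, where `h(S) |T| ≤ |∂T|`. Induction on the size of the support gives
`h(S) ∑ g ≤ ∑_{edges} |g(y) - g(x)|`.

For `g = f²` write `|f(y)² - f(x)²| = |f(y) - f(x)| |f(y) + f(x)|`; Cauchy–Schwarz gives
`h² N² ≤ E P` with `N = ∑ f²`, `E = ∑_{edges} (f(y) - f(x))²`, `P = ∑_{edges} (f(y) + f(x))²`.
As `E + P = 2 ∑ deg(x) f(x)² ≤ 2 d_max N`, we get `h² N² ≤ E (2 d_max N - E)`, a quadratic
inequality in `E` whose smaller root is `(d_max - √(d_max² - h²)) N`.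
-/

open scoped Classical
open Matrix

noncomputable section

namespace SignedPaper

variable {V : Type*}

lemma max_sub_zero_add_min (x m : ℝ) : max (x - m) 0 + min x m = x := by
  rcases le_total x m with h | h <;> simp [h]

/-- Both parts of `x = (x - m)⁺ + min x m` are monotone in `x`, so their increments have the same
sign and the absolute values add. -/
lemma abs_sub_eq_abs_sub_max_add_abs_sub_min (a b m : ℝ) :
    |b - a| = |max (b - m) 0 - max (a - m) 0| + |min b m - min a m| := by
  wlog hab : a ≤ b generalizing a b
  · rw [abs_sub_comm, this b a (le_of_not_ge hab), abs_sub_comm (max _ _), abs_sub_comm (min _ _)]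
  have hmax : max (a - m) 0 ≤ max (b - m) 0 := max_le_max_right 0 (sub_le_sub_right hab m)
  have hmin : min a m ≤ min b m := min_le_min_right m hab
  rw [abs_of_nonneg (sub_nonneg.2 hab), abs_of_nonneg (sub_nonneg.2 hmax),
    abs_of_nonneg (sub_nonneg.2 hmin)]
  linarith [max_sub_zero_add_min a m, max_sub_zero_add_min b m]

section EdgeSums

variable [Fintype V] (G : SimpleGraph V)

lemma mem_edgeBoundary_iff [DecidableEq V] {a b : V} (hab : G.Adj a b) (T : Set V) :
    s(a, b) ∈ edgeBoundary G T ↔ (a ∈ T ∧ b ∉ T) ∨ (b ∈ T ∧ a ∉ T) := by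
  simp only [edgeBoundary, Finset.mem_filter, Finset.mem_univ, true_and,
    SimpleGraph.mem_edgeSet, Sym2.eq_iff]
  constructor
  · rintro ⟨-, x, y, ⟨rfl, rfl⟩ | ⟨rfl, rfl⟩, hx, hy⟩
    exacts [Or.inl ⟨hx, hy⟩, Or.inr ⟨hx, hy⟩]
  · rintro (⟨ha, hb⟩ | ⟨hb, ha⟩)
    exacts [⟨hab, a, b, Or.inl ⟨rfl, rfl⟩, ha, hb⟩, ⟨hab, b, a, Or.inr ⟨rfl, rfl⟩, hb, ha⟩]

lemma hConst_nonneg [DecidableEq V] (S : Finset V) : 0 ≤ hConst G S :=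
  Real.sInf_nonneg fun _ ⟨_, _, _, hx⟩ => hx ▸ by positivity

lemma hConst_mul_card_le [DecidableEq V] {S T : Finset V} (hTS : T ⊆ S) (hT : T.Nonempty) :
    hConst G S * T.card ≤ (edgeBoundary G ↑T).card := by
  have hle : hConst G S ≤ (edgeBoundary G ↑T).card / T.card :=
    csInf_le ⟨0, fun _ ⟨_, _, _, hx⟩ => hx ▸ by positivity⟩ ⟨T, hTS, hT, rfl⟩
  rwa [le_div_iff₀ (by exact_mod_cast hT.card_pos)] at hle

lemma sum_edgeFinset_eq_sum_degree_mul [DecidableRel G.Adj] (g : V → ℝ) (F : Sym2 V → ℝ)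
    (hF : ∀ x y, G.Adj x y → F s(x, y) = g x + g y) :
    ∑ e ∈ G.edgeFinset, F e = ∑ v, (G.degree v : ℝ) * g v := by
  have hedge : ∀ e ∈ G.edgeFinset, F e = ∑ v ∈ Finset.univ.filter (· ∈ e), g v := by
    intro e he
    induction e with
    | _ x y =>
      have hxy : G.Adj x y := SimpleGraph.mem_edgeFinset.1 he
      have hpair : Finset.univ.filter (· ∈ s(x, y)) = {x, y} := by ext; simp
      rw [hF x y hxy, hpair, Finset.sum_pair hxy.ne]
  rw [Finset.sum_congr rfl hedge, Finset.sum_comm' (t' := Finset.univ)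
    (s' := fun v => G.incidenceFinset v)]
  · simp [← SimpleGraph.card_incidenceFinset_eq_degree]
  · intro e v
    simp [SimpleGraph.incidenceSet, and_comm]

def edgeVariation [DecidableRel G.Adj] (g : V → ℝ) : ℝ :=
  ∑ e ∈ G.edgeFinset, Sym2.lift ⟨fun x y => |g y - g x|, fun _ _ => abs_sub_comm _ _⟩ e

variable [DecidableRel G.Adj]

lemma edgeVariation_nonneg (g : V → ℝ) : 0 ≤ edgeVariation G g :=
  Finset.sum_nonneg fun e _ => Sym2.ind (fun _ _ => abs_nonneg _) e

lemma edgeVariation_eq_add_max_min (g : V → ℝ) (m : ℝ) :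
    edgeVariation G g =
      edgeVariation G (fun x => max (g x - m) 0) + edgeVariation G (fun x => min (g x) m) := by
  rw [edgeVariation, edgeVariation, edgeVariation, ← Finset.sum_add_distrib]
  exact Finset.sum_congr rfl fun e _ =>
    Sym2.ind (fun x y => abs_sub_eq_abs_sub_max_add_abs_sub_min (g x) (g y) m) e

lemma edgeVariation_indicator [DecidableEq V] (T : Finset V) {m : ℝ} (hm : 0 ≤ m) :
    edgeVariation G (fun x => if x ∈ T then m else 0) = m * (edgeBoundary G ↑T).card := by
  have hedge : ∀ e ∈ G.edgeFinset,
      Sym2.lift ⟨fun x y => |(if y ∈ T then m else 0) - (if x ∈ T then m else 0)|,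
        fun _ _ => abs_sub_comm _ _⟩ e = if e ∈ edgeBoundary G ↑T then m else 0 := by
    refine Sym2.ind fun x y he => ?_
    simp only [Sym2.lift_mk, mem_edgeBoundary_iff G (SimpleGraph.mem_edgeFinset.1 he),
      Finset.mem_coe]
    by_cases hx : x ∈ T <;> by_cases hy : y ∈ T <;>
      simp only [hx, hy, if_true, if_false, not_true, not_false_eq_true, and_true, and_false,
        or_false, false_or, sub_self, sub_zero, zero_sub, abs_zero, abs_neg, abs_of_nonneg hm]
  have hsub : edgeBoundary G ↑T ⊆ G.edgeFinset := by
    intro e he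
    simp only [edgeBoundary, Finset.mem_filter] at he
    exact SimpleGraph.mem_edgeFinset.2 he.2.1
  calc edgeVariation G (fun x => if x ∈ T then m else 0)
      _ = ∑ e ∈ G.edgeFinset, if e ∈ edgeBoundary G ↑T then m else 0 := Finset.sum_congr rfl hedge
      _ = m * (edgeBoundary G ↑T).card := by
        rw [Finset.sum_ite_mem, Finset.inter_eq_right.2 hsub, Finset.sum_const, nsmul_eq_mul,
          mul_comm]

theorem hConst_mul_sum_le_edgeVariation [DecidableEq V] (S : Finset V) (g : V → ℝ)
    (hg : ∀ x, 0 ≤ g x) (hgS : ∀ x ∉ S, g x = 0) :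
    hConst G S * ∑ x, g x ≤ edgeVariation G g := by
  induction hn : (Finset.univ.filter fun x => g x ≠ 0).card using Nat.strong_induction_on
    generalizing g with
  | _ n ih =>
    set T := Finset.univ.filter fun x => g x ≠ 0
    have hTg : ∀ x, x ∈ T ↔ g x ≠ 0 := by simp [T]
    rcases T.eq_empty_or_nonempty with hTe | hTne
    · have hg0 : ∀ x, g x = 0 := fun x => by simpa [hTe] using hTg x
      simpa [hg0] using edgeVariation_nonneg G g
    obtain ⟨x₀, hx₀T, hx₀min⟩ := T.exists_min_image g hTne
    set m := g x₀
    have hm : 0 ≤ m := hg x₀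
    have hTS : T ⊆ S := fun x hx => by_contra fun h => (hTg x).1 hx (hgS x h)
    have hmin : ∀ x, min (g x) m = if x ∈ T then m else 0 := by
      intro x
      by_cases hx : x ∈ T
      · simp [hx, hx₀min x hx]
      · simp [hx, not_not.1 (mt (hTg x).2 hx), hm]
    set g' := fun x => max (g x - m) 0
    have hsupp : (Finset.univ.filter fun x => g' x ≠ 0) ⊂ T := by
      refine Finset.ssubset_iff_of_subset (fun x hx => ?_) |>.2 ⟨x₀, hx₀T, by simp [g', m]⟩
      simp only [Finset.mem_filter, Finset.mem_univ, true_and, g', ne_eq] at hx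
      exact (hTg x).2 fun h => hx (by simp [h, hm])
    have hIH := ih _ (hn ▸ Finset.card_lt_card hsupp) g' (fun x => le_max_right _ _)
      (fun x hx => by simp [g', hgS x hx, hm]) rfl
    have hsum : ∑ x, g x = ∑ x, g' x + m * T.card := by
      have hsplit := Finset.sum_congr rfl fun x (_ : x ∈ Finset.univ) =>
        (max_sub_zero_add_min (g x) m).symm
      rw [hsplit, Finset.sum_add_distrib, Finset.sum_congr rfl fun x _ => hmin x,
        Finset.sum_ite_mem, Finset.univ_inter, Finset.sum_const, nsmul_eq_mul, mul_comm]
    calc hConst G S * ∑ x, g x = hConst G S * ∑ x, g' x + m * (hConst G S * T.card) := by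
          rw [hsum]; ring
      _ ≤ edgeVariation G g' + m * (edgeBoundary G ↑T).card :=
          add_le_add hIH (mul_le_mul_of_nonneg_left (hConst_mul_card_le G hTS hTne) hm)
      _ = edgeVariation G g := by
          rw [edgeVariation_eq_add_max_min G g m, funext hmin, edgeVariation_indicator G T hm]

lemma sq_edgeVariation_sq_le (f : V → ℝ) :
    edgeVariation G (fun x => f x ^ 2) ^ 2 ≤
      (∑ e ∈ G.edgeFinset, Sym2.lift ⟨fun x y => (f y - f x) ^ 2, fun x y => by ring⟩ e) *
        ∑ e ∈ G.edgeFinset, Sym2.lift ⟨fun x y => (f y + f x) ^ 2, fun x y => by ring⟩ e := by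
  let a : Sym2 V → ℝ := Sym2.lift ⟨fun x y => |f y - f x|, fun _ _ => abs_sub_comm _ _⟩
  let b : Sym2 V → ℝ := Sym2.lift ⟨fun x y => |f y + f x|, fun _ _ => congrArg abs (add_comm _ _)⟩
  calc edgeVariation G (fun x => f x ^ 2) ^ 2 = (∑ e ∈ G.edgeFinset, a e * b e) ^ 2 := by
        congr 1
        refine Finset.sum_congr rfl fun e _ => Sym2.ind (fun x y => ?_) e
        simp only [a, b, Sym2.lift_mk, ← abs_mul]
        ring_nf
    _ ≤ (∑ e ∈ G.edgeFinset, a e ^ 2) * ∑ e ∈ G.edgeFinset, b e ^ 2 :=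
        Finset.sum_mul_sq_le_sq_mul_sq _ _ _
    _ = _ := by
        congr 1 <;> refine Finset.sum_congr rfl fun e _ => Sym2.ind (fun x y => ?_) e <;>
          simp only [a, b, Sym2.lift_mk, sq_abs]

lemma sum_sq_sub_add_sum_sq_add_le (f : V → ℝ) :
    ∑ e ∈ G.edgeFinset, Sym2.lift ⟨fun x y => (f y - f x) ^ 2, fun x y => by ring⟩ e +
        ∑ e ∈ G.edgeFinset, Sym2.lift ⟨fun x y => (f y + f x) ^ 2, fun x y => by ring⟩ e ≤
      2 * G.maxDegree * ∑ x, f x ^ 2 := by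
  rw [← Finset.sum_add_distrib, sum_edgeFinset_eq_sum_degree_mul G (fun v => 2 * f v ^ 2) _
    fun x y _ => by simp only [Sym2.lift_mk]; ring, Finset.mul_sum]
  refine Finset.sum_le_sum fun v _ => ?_
  have hdeg : (G.degree v : ℝ) ≤ G.maxDegree := by exact_mod_cast G.degree_le_maxDegree v
  nlinarith [sq_nonneg (f v)]

end EdgeSums

lemma sub_sqrt_mul_le_of_sq_mul_sq_le {D h N E : ℝ} (hN : 0 ≤ N)
    (hEN : h ^ 2 * N ^ 2 ≤ E * (2 * D * N - E)) : (D - √(D ^ 2 - h ^ 2)) * N ≤ E := by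
  have hsq : (D * N - E) ^ 2 ≤ (D ^ 2 - h ^ 2) * N ^ 2 := by linarith
  have hroot : D * N - E ≤ √(D ^ 2 - h ^ 2) * N :=
    calc D * N - E ≤ |D * N - E| := le_abs_self _
      _ = √((D * N - E) ^ 2) := (Real.sqrt_sq_eq_abs _).symm
      _ ≤ √((D ^ 2 - h ^ 2) * N ^ 2) := Real.sqrt_le_sqrt hsq
      _ = √(D ^ 2 - h ^ 2) * N := by rw [Real.sqrt_mul' _ (sq_nonneg N), Real.sqrt_sq hN]
  linarith

/-- (Lemma on `h(S)`, unsigned graphs.) If `|V| ≥ 4`, `S ⊊ V`,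
`|S| ≤ |V|/2`, and `f > 0` on `S` and `f = 0` off `S`, then
`∑_{{x,y} ∈ E} (f(y) - f(x))² ≥ (d_max - √(d_max² - h(S)²)) ∑_x f(x)²`. -/
theorem sum_gradient_sq_ge [Fintype V] [DecidableEq V] (G : SimpleGraph V)
    [DecidableRel G.Adj] (S : Finset V) (f : V → ℝ)
    (hzero : ∀ x ∉ S, f x = 0) :
    ∑ e ∈ G.edgeFinset, Sym2.lift ⟨fun x y => (f y - f x) ^ 2, fun x y => by ring⟩ e
      ≥ ((G.maxDegree : ℝ) - Real.sqrt ((G.maxDegree : ℝ) ^ 2 - hConst G S ^ 2))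
          * ∑ x, f x ^ 2 := by
  have hcoarea : hConst G S * ∑ x, f x ^ 2 ≤ edgeVariation G (fun x => f x ^ 2) :=
    hConst_mul_sum_le_edgeVariation G S _ (fun x => sq_nonneg _) fun x hx => by simp [hzero x hx]
  have hE : 0 ≤ ∑ e ∈ G.edgeFinset,
      Sym2.lift ⟨fun x y => (f y - f x) ^ 2, fun x y => by ring⟩ e :=
    Finset.sum_nonneg fun e _ => Sym2.ind (fun _ _ => sq_nonneg _) e
  have hN : 0 ≤ ∑ x, f x ^ 2 := Finset.sum_nonneg fun x _ => sq_nonneg _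
  refine sub_sqrt_mul_le_of_sq_mul_sq_le hN ?_
  calc hConst G S ^ 2 * (∑ x, f x ^ 2) ^ 2 = (hConst G S * ∑ x, f x ^ 2) ^ 2 := by ring
    _ ≤ edgeVariation G (fun x => f x ^ 2) ^ 2 :=
        pow_le_pow_left₀ (mul_nonneg (hConst_nonneg G S) hN) hcoarea 2
    _ ≤ _ := sq_edgeVariation_sq_le G f
    _ ≤ _ := mul_le_mul_of_nonneg_left (by linarith [sum_sq_sub_add_sum_sq_add_le G f]) hE

end SignedPaper
end
end
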